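/- Let b : Ω ⊆ ℝ⁴ → 𝕋 be a bicomplex function such that b_ω is ℂ(i₁)-valued, and let W = u + i₂v : Ω → 𝕋 (with u, v ℂ(i₁)-valued and sufficiently smooth) be a solution of the equation W_{ω†₂} = b·W†₂ on Ω. Then u : Ω → ℂ(i₁) satisfies ∂_{ω†₂}∂_ω u − (|b|²_{i₁} + b_ω)u = 0 on Ω, and v : Ω → ℂ(i₁) satisfies ∂_{ω†₂}∂_ω v − (|b|²_{i₁} − b_ω)v = 0 on Ω. -/

import Mathlib

noncomputable section

open Complex Filter Topology

/-- The bicomplex numbers `𝕋 = {z₁ + z₂ i₂ : z₁, z₂ ∈ ℂ(i₁)}`, represented by the pair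
of `ℂ(i₁)`-components `(z₁, z₂)`. -/
@[ext] structure Bicomplex : Type where
  z1 : ℂ
  z2 : ℂ

namespace Bicomplex

instance : Zero Bicomplex := ⟨⟨0, 0⟩⟩
instance : One Bicomplex := ⟨⟨1, 0⟩⟩
instance : Add Bicomplex := ⟨fun w v => ⟨w.z1 + v.z1, w.z2 + v.z2⟩⟩
instance : Neg Bicomplex := ⟨fun w => ⟨-w.z1, -w.z2⟩⟩
instance : Mul Bicomplex := ⟨fun w v => ⟨w.z1 * v.z1 - w.z2 * v.z2, w.z1 * v.z2 + w.z2 * v.z1⟩⟩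

@[simp] lemma zero_z1 : (0 : Bicomplex).z1 = 0 := rfl
@[simp] lemma zero_z2 : (0 : Bicomplex).z2 = 0 := rfl
@[simp] lemma one_z1 : (1 : Bicomplex).z1 = 1 := rfl
@[simp] lemma one_z2 : (1 : Bicomplex).z2 = 0 := rfl
@[simp] lemma add_z1 (w v : Bicomplex) : (w + v).z1 = w.z1 + v.z1 := rfl
@[simp] lemma add_z2 (w v : Bicomplex) : (w + v).z2 = w.z2 + v.z2 := rfl
@[simp] lemma neg_z1 (w : Bicomplex) : (-w).z1 = -w.z1 := rfl
@[simp] lemma neg_z2 (w : Bicomplex) : (-w).z2 = -w.z2 := rfl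
@[simp] lemma mul_z1 (w v : Bicomplex) : (w * v).z1 = w.z1 * v.z1 - w.z2 * v.z2 := rfl
@[simp] lemma mul_z2 (w v : Bicomplex) : (w * v).z2 = w.z1 * v.z2 + w.z2 * v.z1 := rfl

/-- The bicomplex numbers form a commutative ring. -/
instance : CommRing Bicomplex where
  nsmul n w := ⟨n • w.z1, n • w.z2⟩
  zsmul n w := ⟨n • w.z1, n • w.z2⟩
  nsmul_zero a := by ext <;> exact zero_smul ℕ _
  nsmul_succ n a := by ext <;> exact succ_nsmul _ n
  zsmul_zero' a := by ext <;> exact zero_smul ℤ _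
  zsmul_succ' n a := by ext <;> (show ((n.succ : ℕ) : ℤ) • _ = (n : ℤ) • _ + _; simp; ring)
  zsmul_neg' n a := by ext <;> (show (Int.negSucc n) • _ = -(((n.succ : ℕ) : ℤ) • _); simp [add_zsmul]; ring)
  add_assoc a b c := by ext <;> simp <;> ring
  zero_add a := by ext <;> simp
  add_zero a := by ext <;> simp
  add_comm a b := by ext <;> simp <;> ring
  neg_add_cancel a := by ext <;> simp
  mul_assoc a b c := by ext <;> simp <;> ring
  one_mul a := by ext <;> simp
  mul_one a := by ext <;> simp
  left_distrib a b c := by ext <;> simp <;> ring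
  right_distrib a b c := by ext <;> simp <;> ring
  zero_mul a := by ext <;> simp
  mul_zero a := by ext <;> simp
  mul_comm a b := by ext <;> simp <;> ring

/-- Inverse: `w⁻¹ = w†₂ / (z₁² + z₂²)` (junk value `0/0` on the null-cone). -/
instance : Inv Bicomplex :=
  ⟨fun w => ⟨w.z1 / (w.z1 ^ 2 + w.z2 ^ 2), -w.z2 / (w.z1 ^ 2 + w.z2 ^ 2)⟩⟩

instance : Div Bicomplex := ⟨fun w v => w * v⁻¹⟩

/-- Embedding of `ℂ(i₁)` into `𝕋`. -/
def ofComplex (c : ℂ) : Bicomplex := ⟨c, 0⟩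

/-- Embedding of `ℝ` into `𝕋`. -/
def ofReal (t : ℝ) : Bicomplex := ⟨(t : ℂ), 0⟩

/-- The imaginary unit `i₁`. -/
def i1 : Bicomplex := ⟨Complex.I, 0⟩

/-- The imaginary unit `i₂`. -/
def i2 : Bicomplex := ⟨0, 1⟩

/-- The hyperbolic unit `j = i₁ i₂`. -/
def jj : Bicomplex := ⟨0, Complex.I⟩

/-- The idempotent `e₁ = (1 + j)/2`. -/
def e1 : Bicomplex := ⟨1 / 2, Complex.I / 2⟩

/-- The idempotent `e₂ = (1 - j)/2`. -/
def e2 : Bicomplex := ⟨1 / 2, -(Complex.I) / 2⟩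

/-- The projection `P₁(z₁ + z₂ i₂) = z₁ - z₂ i₁`. -/
def P1 (w : Bicomplex) : ℂ := w.z1 - w.z2 * Complex.I

/-- The projection `P₂(z₁ + z₂ i₂) = z₁ + z₂ i₁`. -/
def P2 (w : Bicomplex) : ℂ := w.z1 + w.z2 * Complex.I

/-- The conjugation `w†₁ = z̄₁ + z̄₂ i₂`. -/
def dag1 (w : Bicomplex) : Bicomplex := ⟨(starRingEnd ℂ) w.z1, (starRingEnd ℂ) w.z2⟩

/-- The conjugation `w†₂ = z₁ - z₂ i₂`. -/
def dag2 (w : Bicomplex) : Bicomplex := ⟨w.z1, -w.z2⟩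

/-- The conjugation `w†₃ = z̄₁ - z̄₂ i₂`. -/
def dag3 (w : Bicomplex) : Bicomplex := ⟨(starRingEnd ℂ) w.z1, -((starRingEnd ℂ) w.z2)⟩

/-- `𝕋` as `ℂ × ℂ`. -/
def toProd (w : Bicomplex) : ℂ × ℂ := (w.z1, w.z2)

/-- `ℂ × ℂ` as `𝕋`. -/
def ofProd (p : ℂ × ℂ) : Bicomplex := ⟨p.1, p.2⟩

instance : TopologicalSpace Bicomplex := TopologicalSpace.induced toProd inferInstance

/-- The set of points `w` such that `w - w₀` is invertible (i.e. not a zero divisor). -/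
def invertibleDiff (w₀ : Bicomplex) : Set Bicomplex :=
  {w | (w - w₀).z1 ^ 2 + (w - w₀).z2 ^ 2 ≠ 0}

/-- `f` is `𝕋`-differentiable at `w₀` with derivative `d`:
`(f w - f w₀)/(w - w₀) → d` as `w → w₀` with `w - w₀` invertible. -/
def HasTDerivAt (f : Bicomplex → Bicomplex) (d w₀ : Bicomplex) : Prop :=
  Tendsto (fun w => (f w - f w₀) / (w - w₀)) (𝓝[invertibleDiff w₀] w₀) (𝓝 d)

/-- `f` is `𝕋`-holomorphic on `U` if it is `𝕋`-differentiable at each point of `U`. -/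
def THolomorphicOn (f : Bicomplex → Bicomplex) (U : Set Bicomplex) : Prop :=
  ∀ w ∈ U, ∃ d, HasTDerivAt f d w

/-- `f` viewed as a map `ℂ² → ℂ²`. -/
def fProd (f : Bicomplex → Bicomplex) : ℂ × ℂ → ℂ × ℂ := fun p => toProd (f (ofProd p))

/-- `f : 𝕋 → 𝕋` is `n` times continuously (real-)differentiable on `U`. -/
def TContDiffOn (n : ℕ∞) (f : Bicomplex → Bicomplex) (U : Set Bicomplex) : Prop :=
  ContDiffOn ℝ n (fProd f) (toProd '' U)

/-- `g : 𝕋 → ℂ` is `n` times continuously (real-)differentiable on `U`. -/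
def CContDiffOn (n : ℕ∞) (g : Bicomplex → ℂ) (U : Set Bicomplex) : Prop :=
  ContDiffOn ℝ n (fun p => g (ofProd p)) (toProd '' U)

/-- Real partial derivative of `g : 𝕋 → ℂ` at `w` in direction `e`. -/
def pd (e : Bicomplex) (g : Bicomplex → ℂ) (w : Bicomplex) : ℂ :=
  deriv (fun t : ℝ => g (w + ofReal t * e)) 0

/-- Existence of the real partial derivative of `g : 𝕋 → ℂ` at `w` in direction `e`. -/
def pdExists (e : Bicomplex) (g : Bicomplex → ℂ) (w : Bicomplex) : Prop :=
  DifferentiableAt ℝ (fun t : ℝ => g (w + ofReal t * e)) 0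

/-- The scalar (`ℂ(i₁)`-) component `f₁` of `f = f₁ + f₂ i₂`. -/
def s1 (f : Bicomplex → Bicomplex) : Bicomplex → ℂ := fun w => (f w).z1

/-- The vectorial (`ℂ(i₁)`-) component `f₂` of `f = f₁ + f₂ i₂`. -/
def s2 (f : Bicomplex → Bicomplex) : Bicomplex → ℂ := fun w => (f w).z2

/-- Real partial derivative of `f : 𝕋 → 𝕋` in direction `e`. -/
def pdT (e : Bicomplex) (f : Bicomplex → Bicomplex) : Bicomplex → Bicomplex :=
  fun w => ⟨pd e (s1 f) w, pd e (s2 f) w⟩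

/-- Existence of the real partial derivative of `f : 𝕋 → 𝕋` in direction `e`. -/
def pdTExists (e : Bicomplex) (f : Bicomplex → Bicomplex) (w : Bicomplex) : Prop :=
  pdExists e (s1 f) w ∧ pdExists e (s2 f) w

/-- `∂_{z₁} g = ½(∂ₓ g - i₁ ∂_y g)` for `g : 𝕋 → ℂ`. -/
def dz1 (g : Bicomplex → ℂ) : Bicomplex → ℂ :=
  fun w => (pd 1 g w - Complex.I * pd i1 g w) / 2

/-- `∂_{z̄₁} g = ½(∂ₓ g + i₁ ∂_y g)` for `g : 𝕋 → ℂ`. -/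
def dz1bar (g : Bicomplex → ℂ) : Bicomplex → ℂ :=
  fun w => (pd 1 g w + Complex.I * pd i1 g w) / 2

/-- `∂_{z₂} g = ½(∂_p g - i₁ ∂_q g)` for `g : 𝕋 → ℂ`. -/
def dz2 (g : Bicomplex → ℂ) : Bicomplex → ℂ :=
  fun w => (pd i2 g w - Complex.I * pd jj g w) / 2

/-- `∂_{z̄₂} g = ½(∂_p g + i₁ ∂_q g)` for `g : 𝕋 → ℂ`. -/
def dz2bar (g : Bicomplex → ℂ) : Bicomplex → ℂ :=
  fun w => (pd i2 g w + Complex.I * pd jj g w) / 2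

/-- `∂_{z₁}` applied componentwise to `f : 𝕋 → 𝕋`. -/
def dZ1 (f : Bicomplex → Bicomplex) : Bicomplex → Bicomplex :=
  fun w => ⟨dz1 (s1 f) w, dz1 (s2 f) w⟩

/-- `∂_{z₂}` applied componentwise to `f : 𝕋 → 𝕋`. -/
def dZ2 (f : Bicomplex → Bicomplex) : Bicomplex → Bicomplex :=
  fun w => ⟨dz2 (s1 f) w, dz2 (s2 f) w⟩

/-- `∂_{z̄₁}` applied componentwise to `f : 𝕋 → 𝕋`. -/
def dZ1bar (f : Bicomplex → Bicomplex) : Bicomplex → Bicomplex :=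
  fun w => ⟨dz1bar (s1 f) w, dz1bar (s2 f) w⟩

/-- `∂_{z̄₂}` applied componentwise to `f : 𝕋 → 𝕋`. -/
def dZ2bar (f : Bicomplex → Bicomplex) : Bicomplex → Bicomplex :=
  fun w => ⟨dz2bar (s1 f) w, dz2bar (s2 f) w⟩

/-- `∂_ω = ½(∂_{z₁} - i₂ ∂_{z₂})`. -/
def dOm (f : Bicomplex → Bicomplex) : Bicomplex → Bicomplex :=
  fun w => ofComplex (1 / 2) * (dZ1 f w - i2 * dZ2 f w)

/-- `∂_{ω†₂} = ∂_ω̄ = ½(∂_{z₁} + i₂ ∂_{z₂})`. -/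
def dOmBar (f : Bicomplex → Bicomplex) : Bicomplex → Bicomplex :=
  fun w => ofComplex (1 / 2) * (dZ1 f w + i2 * dZ2 f w)

/-- `∂_{ω†₁} = ½(∂_{z̄₁} - i₂ ∂_{z̄₂})`. -/
def dOmDag1 (f : Bicomplex → Bicomplex) : Bicomplex → Bicomplex :=
  fun w => ofComplex (1 / 2) * (dZ1bar f w - i2 * dZ2bar f w)

/-- `∂_{ω†₃} = ½(∂_{z̄₁} + i₂ ∂_{z̄₂})`. -/
def dOmDag3 (f : Bicomplex → Bicomplex) : Bicomplex → Bicomplex :=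
  fun w => ofComplex (1 / 2) * (dZ1bar f w + i2 * dZ2bar f w)

/-- The complexified Laplacian `Δ_ℂ = ∂²_{z₁} + ∂²_{z₂}` acting on `ℂ(i₁)`-valued functions. -/
def lapC (g : Bicomplex → ℂ) : Bicomplex → ℂ :=
  fun w => dz1 (dz1 g) w + dz2 (dz2 g) w

/-- The vector part in the `i₂`-representation `w = ζ₁ + ζ₂ i₁` with `ζ₁, ζ₂ ∈ ℂ(i₂)`:
for `w = x₁ + x₂i₁ + x₃i₂ + x₄j`, `Vec(w) = x₂ + x₄ i₂`, encoded as the complex number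
`x₂ + x₄ i`. -/
def vec2 (w : Bicomplex) : ℂ := ⟨w.z1.im, w.z2.im⟩

/-- Embedding of `ℂ(i₂)` into `𝕋`: the complex number `a + b i` represents `a + b i₂`. -/
def ofC2 (c : ℂ) : Bicomplex := ⟨(c.re : ℂ), (c.im : ℂ)⟩

/-- Multiplication of hyperbolic numbers `ℂ(j) = {x + yj}`, encoded as pairs in `ℝ × ℝ`. -/
def hmul (a b : ℝ × ℝ) : ℝ × ℝ := (a.1 * b.1 + a.2 * b.2, a.1 * b.2 + a.2 * b.1)

/-- Division of hyperbolic numbers (junk value when the denominator is a zero divisor). -/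
def hdiv (a b : ℝ × ℝ) : ℝ × ℝ :=
  hmul a (b.1 / (b.1 ^ 2 - b.2 ^ 2), -b.2 / (b.1 ^ 2 - b.2 ^ 2))

/-- Embedding of the hyperbolic numbers `ℂ(j)` into `𝕋`: `(x, y) ↦ x + y j`. -/
def ofHyp (a : ℝ × ℝ) : Bicomplex := ⟨(a.1 : ℂ), (a.2 : ℂ) * Complex.I⟩

/-- The vector part in the `j`-representation `w = ζ₁ + ζ₂ i₁` with `ζ₁, ζ₂ ∈ ℂ(j)`:
for `w = x₁ + x₂i₁ + x₃i₂ + x₄j`, `Vec(w) = x₂ - x₃ j`, encoded as the pair `(x₂, -x₃)`. -/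
def vec3 (w : Bicomplex) : ℝ × ℝ := (w.z1.im, -w.z2.re)

/-- The `𝕋`-cartesian set `X₁ ×ₑ X₂ = {w : P₁ w ∈ X₁ ∧ P₂ w ∈ X₂}`. -/
def eProd (X₁ X₂ : Set ℂ) : Set Bicomplex := {w | P1 w ∈ X₁ ∧ P2 w ∈ X₂}

/-- `(F, G)` is an `i₁`-generating pair on `D`. -/
def GenPair1 (F G : Bicomplex → Bicomplex) (D : Set Bicomplex) : Prop :=
  TContDiffOn 2 F D ∧ TContDiffOn 2 G D ∧ ∀ w ∈ D, (dag2 (F w) * G w).z2 ≠ 0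

/-- `(F, G)` is an `i₂`-generating pair on `D`. -/
def GenPair2 (F G : Bicomplex → Bicomplex) (D : Set Bicomplex) : Prop :=
  TContDiffOn 2 F D ∧ TContDiffOn 2 G D ∧ ∀ w ∈ D, vec2 (dag1 (F w) * G w) ≠ 0

/-- `(F, G)` is a `j`-generating pair on `D`. -/
def GenPairJ (F G : Bicomplex → Bicomplex) (D : Set Bicomplex) : Prop :=
  TContDiffOn 2 F D ∧ TContDiffOn 2 G D ∧ ∀ w ∈ D, vec3 (dag3 (F w) * G w) ≠ 0

/-- The unique `λ₀ ∈ ℂ(i₁)` with `w(ω₀) = λ₀ F(ω₀) + μ₀ G(ω₀)`. -/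
def lam1 (F G wf : Bicomplex → Bicomplex) (ω₀ : Bicomplex) : ℂ :=
  (dag2 (wf ω₀) * G ω₀).z2 / (dag2 (F ω₀) * G ω₀).z2

/-- The unique `μ₀ ∈ ℂ(i₁)` with `w(ω₀) = λ₀ F(ω₀) + μ₀ G(ω₀)`. -/
def mu1 (F G wf : Bicomplex → Bicomplex) (ω₀ : Bicomplex) : ℂ :=
  -((dag2 (wf ω₀) * F ω₀).z2 / (dag2 (F ω₀) * G ω₀).z2)

/-- `w` has `(F,G)_{i₁}`-derivative `d` at `ω₀`. -/
def HasFGDeriv1 (F G wf : Bicomplex → Bicomplex) (d ω₀ : Bicomplex) : Prop :=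
  Tendsto
    (fun ω => (wf ω - ofComplex (lam1 F G wf ω₀) * F ω - ofComplex (mu1 F G wf ω₀) * G ω)
        / (ω - ω₀))
    (𝓝[invertibleDiff ω₀] ω₀) (𝓝 d)

/-- The unique `λ₀ ∈ ℂ(j)` with `w(ω₀) = λ₀ F(ω₀) + μ₀ G(ω₀)`. -/
def lamJ (F G wf : Bicomplex → Bicomplex) (ω₀ : Bicomplex) : ℝ × ℝ :=
  hdiv (vec3 (dag3 (wf ω₀) * G ω₀)) (vec3 (dag3 (F ω₀) * G ω₀))

/-- The unique `μ₀ ∈ ℂ(j)` with `w(ω₀) = λ₀ F(ω₀) + μ₀ G(ω₀)`. -/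
def muJ (F G wf : Bicomplex → Bicomplex) (ω₀ : Bicomplex) : ℝ × ℝ :=
  -(hdiv (vec3 (dag3 (wf ω₀) * F ω₀)) (vec3 (dag3 (F ω₀) * G ω₀)))

/-- `w` has `(F,G)_j`-derivative `d` at `ω₀`. -/
def HasFGDerivJ (F G wf : Bicomplex → Bicomplex) (d ω₀ : Bicomplex) : Prop :=
  Tendsto
    (fun ω => (wf ω - ofHyp (lamJ F G wf ω₀) * F ω - ofHyp (muJ F G wf ω₀) * G ω) / (ω - ω₀))
    (𝓝[invertibleDiff ω₀] ω₀) (𝓝 d)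

/-- `w` is `(F,G)_j`-pseudoanalytic on `D`. -/
def PseudoanalyticJ (F G wf : Bicomplex → Bicomplex) (D : Set Bicomplex) : Prop :=
  ∀ ω ∈ D, ∃ d, HasFGDerivJ F G wf d ω

/-- `w` has continuous partial derivatives in a neighborhood of `ω₀`. -/
def HasContPartialsNear (f : Bicomplex → Bicomplex) (w₀ : Bicomplex) : Prop :=
  ∃ V ∈ 𝓝 w₀, ∀ e ∈ ({1, i1, i2, jj} : Set Bicomplex),
    (∀ w ∈ V, pdTExists e f w) ∧ ContinuousOn (pdT e f) V

/-! Characteristic coefficients with respect to the `†₂` conjugation (`i₁` case). -/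

def denom2 (F G : Bicomplex → Bicomplex) (w : Bicomplex) : Bicomplex :=
  F w * dag2 (G w) - dag2 (F w) * G w

def aCoef2₁ (F G : Bicomplex → Bicomplex) (w : Bicomplex) : Bicomplex :=
  -((dag1 (F w) * dOmDag1 G w - dOmDag1 F w * dag1 (G w)) / denom2 F G w)

def bCoef2₁ (F G : Bicomplex → Bicomplex) (w : Bicomplex) : Bicomplex :=
  (F w * dOmDag1 G w - dOmDag1 F w * G w) / denom2 F G w

def aCoef2₂ (F G : Bicomplex → Bicomplex) (w : Bicomplex) : Bicomplex :=
  -((dag2 (F w) * dOmBar G w - dOmBar F w * dag2 (G w)) / denom2 F G w)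

def bCoef2₂ (F G : Bicomplex → Bicomplex) (w : Bicomplex) : Bicomplex :=
  (F w * dOmBar G w - dOmBar F w * G w) / denom2 F G w

def aCoef2₃ (F G : Bicomplex → Bicomplex) (w : Bicomplex) : Bicomplex :=
  -((dag3 (F w) * dOmDag3 G w - dOmDag3 F w * dag3 (G w)) / denom2 F G w)

def bCoef2₃ (F G : Bicomplex → Bicomplex) (w : Bicomplex) : Bicomplex :=
  (F w * dOmDag3 G w - dOmDag3 F w * G w) / denom2 F G w

def Acoef2 (F G : Bicomplex → Bicomplex) (w : Bicomplex) : Bicomplex :=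
  -((dag2 (F w) * dOm G w - dOm F w * dag2 (G w)) / denom2 F G w)

def Bcoef2 (F G : Bicomplex → Bicomplex) (w : Bicomplex) : Bicomplex :=
  (F w * dOm G w - dOm F w * G w) / denom2 F G w

/-! Characteristic coefficients with respect to the `†₃` conjugation (`j` case). -/

def denom3 (F G : Bicomplex → Bicomplex) (w : Bicomplex) : Bicomplex :=
  F w * dag3 (G w) - dag3 (F w) * G w

def aCoef3₁ (F G : Bicomplex → Bicomplex) (w : Bicomplex) : Bicomplex :=
  -((dag1 (F w) * dOmDag1 G w - dOmDag1 F w * dag1 (G w)) / denom3 F G w)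

def bCoef3₁ (F G : Bicomplex → Bicomplex) (w : Bicomplex) : Bicomplex :=
  (F w * dOmDag1 G w - dOmDag1 F w * G w) / denom3 F G w

def aCoef3₂ (F G : Bicomplex → Bicomplex) (w : Bicomplex) : Bicomplex :=
  -((dag2 (F w) * dOmBar G w - dOmBar F w * dag2 (G w)) / denom3 F G w)

def bCoef3₂ (F G : Bicomplex → Bicomplex) (w : Bicomplex) : Bicomplex :=
  (F w * dOmBar G w - dOmBar F w * G w) / denom3 F G w

def aCoef3₃ (F G : Bicomplex → Bicomplex) (w : Bicomplex) : Bicomplex :=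
  -((dag3 (F w) * dOmDag3 G w - dOmDag3 F w * dag3 (G w)) / denom3 F G w)

def bCoef3₃ (F G : Bicomplex → Bicomplex) (w : Bicomplex) : Bicomplex :=
  (F w * dOmDag3 G w - dOmDag3 F w * G w) / denom3 F G w

def Acoef3 (F G : Bicomplex → Bicomplex) (w : Bicomplex) : Bicomplex :=
  -((dag3 (F w) * dOm G w - dOm F w * dag3 (G w)) / denom3 F G w)

def Bcoef3 (F G : Bicomplex → Bicomplex) (w : Bicomplex) : Bicomplex :=
  (F w * dOm G w - dOm F w * G w) / denom3 F G w

/-! Classical (Bers) pseudoanalytic function theory in `ℂ(i₁)`. -/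

/-- A complex (in `i₁`) generating pair on `D ⊆ ℂ(i₁)`. -/
def ComplexGenPair (Fe Ge : ℂ → ℂ) (D : Set ℂ) : Prop :=
  ContDiffOn ℝ 2 Fe D ∧ ContDiffOn ℝ 2 Ge D ∧
    ∀ z ∈ D, ((starRingEnd ℂ) (Fe z) * Ge z).im ≠ 0

/-- The unique real `λ₀` with `w(z₀) = λ₀ F(z₀) + μ₀ G(z₀)`. -/
def lamBers (Fe Ge we : ℂ → ℂ) (z₀ : ℂ) : ℝ :=
  ((starRingEnd ℂ) (we z₀) * Ge z₀).im / ((starRingEnd ℂ) (Fe z₀) * Ge z₀).im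

/-- The unique real `μ₀` with `w(z₀) = λ₀ F(z₀) + μ₀ G(z₀)`. -/
def muBers (Fe Ge we : ℂ → ℂ) (z₀ : ℂ) : ℝ :=
  -(((starRingEnd ℂ) (we z₀) * Fe z₀).im / ((starRingEnd ℂ) (Fe z₀) * Ge z₀).im)

/-- `w_e` has Bers `(F_e,G_e)`-derivative `d` at `z₀`. -/
def HasBersDerivAt (Fe Ge we : ℂ → ℂ) (d z₀ : ℂ) : Prop :=
  Tendsto
    (fun z => (we z - (lamBers Fe Ge we z₀ : ℂ) * Fe z - (muBers Fe Ge we z₀ : ℂ) * Ge z)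
        / (z - z₀))
    (𝓝[≠] z₀) (𝓝 d)

/-- `w_e` is `(F_e,G_e)`-pseudoanalytic (in the sense of Bers) on `D`. -/
def BersPseudoanalyticOn (Fe Ge we : ℂ → ℂ) (D : Set ℂ) : Prop :=
  ∀ z ∈ D, ∃ d, HasBersDerivAt Fe Ge we d z

/-- `∂_z̄ = ½(∂ₓ + i ∂_y)` for functions `ℂ(i₁) → ℂ(i₁)`. -/
def dzbarC (g : ℂ → ℂ) (z : ℂ) : ℂ :=
  (deriv (fun t : ℝ => g (z + t)) 0 + Complex.I * deriv (fun t : ℝ => g (z + t * Complex.I)) 0) / 2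

/-- The Bers characteristic coefficient `a_{(F_e,G_e)}`. -/
def aBers (Fe Ge : ℂ → ℂ) (z : ℂ) : ℂ :=
  -(((starRingEnd ℂ) (Fe z) * dzbarC Ge z - dzbarC Fe z * (starRingEnd ℂ) (Ge z)) /
    (Fe z * (starRingEnd ℂ) (Ge z) - (starRingEnd ℂ) (Fe z) * Ge z))

/-- The Bers characteristic coefficient `b_{(F_e,G_e)}`. -/
def bBers (Fe Ge : ℂ → ℂ) (z : ℂ) : ℂ :=
  (Fe z * dzbarC Ge z - dzbarC Fe z * Ge z) /
    (Fe z * (starRingEnd ℂ) (Ge z) - (starRingEnd ℂ) (Fe z) * Ge z)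

/-- `(F, G)` is the `i₂e`-generating pair associated to complex generating pairs
`(F_{e1}, G_{e1})` on `D₁` and `(F_{e2}, G_{e2})` on `D₂`. -/
def I2eGenPair (Fe1 Ge1 Fe2 Ge2 : ℂ → ℂ) (D₁ D₂ : Set ℂ)
    (F G : Bicomplex → Bicomplex) : Prop :=
  ComplexGenPair Fe1 Ge1 D₁ ∧ ComplexGenPair Fe2 Ge2 D₂ ∧
  (∀ w, F w = ofComplex (Fe1 (P1 w)) * e1 + ofComplex (Fe2 (P2 w)) * e2) ∧
  (∀ w, G w = ofComplex (Ge1 (P1 w)) * e1 + ofComplex (Ge2 (P2 w)) * e2)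

end Bicomplex

open Bicomplex

/-!
Write `u, v, b₁, b₂` for the `ℂ(i₁)`-components of `W` and `b` in the coordinates `(z₁, z₂)`,
and `∂₁, ∂₂` for `∂_{z₁}, ∂_{z₂}`. Since `∂₁` and `∂₂` commute on `C²` functions,
`∂_{ω†₂}∂_ω u = ¼(∂₁² + ∂₂²)u` for scalar `u`. The equation `W_{ω†₂} = bW†₂` is the system
`∂₁u - ∂₂v = 2(b₁u + b₂v)`, `∂₁v + ∂₂u = 2(b₂u - b₁v)`, and
`(∂₁² + ∂₂²)u = ∂₁(∂₁u - ∂₂v) + ∂₂(∂₂u + ∂₁v)`. Differentiating the right-hand sides by Leibniz'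
rule and substituting the system again gives `4(|b|²_{i₁} + (b_ω)₁)u + 4(b_ω)₂v`, and `(b_ω)₂ = 0`
because `b_ω` is `ℂ(i₁)`-valued; `v` is handled in the same way.
-/

section Wirtinger

variable {E : Type*} [NormedAddCommGroup E] [NormedSpace ℝ E] {F G : E → ℂ} {p : E} (a b : E)

def wirtinger (G : E → ℂ) (p : E) : ℂ := (fderiv ℝ G p a - I * fderiv ℝ G p b) / 2

theorem wirtinger_congr (h : F =ᶠ[𝓝 p] G) : wirtinger a b F p = wirtinger a b G p := by
  simp only [wirtinger, h.fderiv_eq]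

theorem wirtinger_add (hF : DifferentiableAt ℝ F p) (hG : DifferentiableAt ℝ G p) :
    wirtinger a b (fun q => F q + G q) p = wirtinger a b F p + wirtinger a b G p := by
  simp only [wirtinger, fderiv_fun_add hF hG, add_apply]
  ring

theorem wirtinger_sub (hF : DifferentiableAt ℝ F p) (hG : DifferentiableAt ℝ G p) :
    wirtinger a b (fun q => F q - G q) p = wirtinger a b F p - wirtinger a b G p := by
  simp only [wirtinger, fderiv_fun_sub hF hG, sub_apply]
  ring

theorem wirtinger_const_mul (hG : DifferentiableAt ℝ G p) (c : ℂ) :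
    wirtinger a b (fun q => c * G q) p = c * wirtinger a b G p := by
  simp only [wirtinger, fderiv_const_mul hG, smul_apply, smul_eq_mul]
  ring

theorem wirtinger_mul (hF : DifferentiableAt ℝ F p) (hG : DifferentiableAt ℝ G p) :
    wirtinger a b (fun q => F q * G q) p = wirtinger a b F p * G p + F p * wirtinger a b G p := by
  simp only [wirtinger, fderiv_fun_mul hF hG, add_apply, smul_apply, smul_eq_mul]
  ring

theorem differentiableAt_fderiv_of_contDiffAt_two (hG : ContDiffAt ℝ 2 G p) :
    DifferentiableAt ℝ (fderiv ℝ G) p :=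
  (hG.fderiv_right (m := 1) (by norm_num)).differentiableAt (by norm_num)

theorem differentiableAt_wirtinger (hG : ContDiffAt ℝ 2 G p) :
    DifferentiableAt ℝ (wirtinger a b G) p := by
  have := differentiableAt_fderiv_of_contDiffAt_two hG
  unfold wirtinger
  fun_prop

theorem fderiv_wirtinger_apply (hG : ContDiffAt ℝ 2 G p) (v : E) :
    fderiv ℝ (wirtinger a b G) p v =
      (fderiv ℝ (fderiv ℝ G) p v a - I * fderiv ℝ (fderiv ℝ G) p v b) / 2 := by
  have hd := differentiableAt_fderiv_of_contDiffAt_two hG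
  have ha : DifferentiableAt ℝ (fun q => fderiv ℝ G q a) p := by fun_prop
  have hb : DifferentiableAt ℝ (fun q => fderiv ℝ G q b) p := by fun_prop
  have hw : wirtinger a b G = fun q => 2⁻¹ * (fderiv ℝ G q a - I * fderiv ℝ G q b) :=
    funext fun q => div_eq_inv_mul _ _
  rw [hw, fderiv_const_mul (ha.fun_sub (hb.const_mul I)), fderiv_fun_sub ha (hb.const_mul I),
    fderiv_const_mul hb, fderiv_clm_apply hd (differentiableAt_const a),
    fderiv_clm_apply hd (differentiableAt_const b)]
  simp [div_eq_inv_mul]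

theorem wirtinger_comm (hG : ContDiffAt ℝ 2 G p) (c d : E) :
    wirtinger a b (wirtinger c d G) p = wirtinger c d (wirtinger a b G) p := by
  have hsymm := hG.isSymmSndFDerivAt (by simp)
  simp only [wirtinger, fderiv_wirtinger_apply _ _ hG, hsymm a, hsymm b]
  ring

end Wirtinger

local notation "∂₁" => wirtinger ((1 : ℂ), (0 : ℂ)) (I, 0)
local notation "∂₂" => wirtinger ((0 : ℂ), (1 : ℂ)) (0, I)

theorem wirtinger_laplacian_of_system {U V B₁ B₂ : ℂ × ℂ → ℂ} {p : ℂ × ℂ}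
    (hU : ContDiffAt ℝ 2 U p) (hV : ContDiffAt ℝ 2 V p)
    (hB₁ : DifferentiableAt ℝ B₁ p) (hB₂ : DifferentiableAt ℝ B₂ p)
    (h₁ : (fun q => ∂₁ U q - ∂₂ V q) =ᶠ[𝓝 p] fun q => 2 * (B₁ q * U q + B₂ q * V q))
    (h₂ : (fun q => ∂₁ V q + ∂₂ U q) =ᶠ[𝓝 p] fun q => 2 * (B₂ q * U q - B₁ q * V q)) :
    ∂₁ (∂₁ U) p + ∂₂ (∂₂ U) p =
        2 * ((∂₁ B₁ p + ∂₂ B₂ p) * U p + (∂₁ B₂ p - ∂₂ B₁ p) * V p) +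
          4 * (B₁ p ^ 2 + B₂ p ^ 2) * U p ∧
      ∂₁ (∂₁ V) p + ∂₂ (∂₂ V) p =
        2 * ((∂₁ B₂ p - ∂₂ B₁ p) * U p - (∂₁ B₁ p + ∂₂ B₂ p) * V p) +
          4 * (B₁ p ^ 2 + B₂ p ^ 2) * V p := by
  have hU' := hU.differentiableAt (by norm_num)
  have hV' := hV.differentiableAt (by norm_num)
  have hdU := fun a b : ℂ × ℂ => differentiableAt_wirtinger a b hU
  have hdV := fun a b : ℂ × ℂ => differentiableAt_wirtinger a b hV
  have d₁ (a b : ℂ × ℂ) : wirtinger a b (∂₁ U) p - wirtinger a b (∂₂ V) p =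
      2 * (wirtinger a b B₁ p * U p + B₁ p * wirtinger a b U p +
        (wirtinger a b B₂ p * V p + B₂ p * wirtinger a b V p)) := by
    rw [← wirtinger_sub a b (hdU _ _) (hdV _ _), wirtinger_congr a b h₁,
      wirtinger_const_mul a b ((hB₁.fun_mul hU').fun_add (hB₂.fun_mul hV')),
      wirtinger_add a b (hB₁.fun_mul hU') (hB₂.fun_mul hV'), wirtinger_mul a b hB₁ hU',
      wirtinger_mul a b hB₂ hV']
  have d₂ (a b : ℂ × ℂ) : wirtinger a b (∂₁ V) p + wirtinger a b (∂₂ U) p =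
      2 * (wirtinger a b B₂ p * U p + B₂ p * wirtinger a b U p -
        (wirtinger a b B₁ p * V p + B₁ p * wirtinger a b V p)) := by
    rw [← wirtinger_add a b (hdV _ _) (hdU _ _), wirtinger_congr a b h₂,
      wirtinger_const_mul a b ((hB₂.fun_mul hU').fun_sub (hB₁.fun_mul hV')),
      wirtinger_sub a b (hB₂.fun_mul hU') (hB₁.fun_mul hV'), wirtinger_mul a b hB₂ hU',
      wirtinger_mul a b hB₁ hV']
  have e₁ := h₁.eq_of_nhds
  have e₂ := h₂.eq_of_nhds
  have cU := wirtinger_comm ((1 : ℂ), (0 : ℂ)) (I, 0) hU (0, 1) (0, I)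
  have cV := wirtinger_comm ((1 : ℂ), (0 : ℂ)) (I, 0) hV (0, 1) (0, I)
  constructor
  · linear_combination d₁ (1, 0) (I, 0) + d₂ (0, 1) (0, I) + cV + 2 * B₁ p * e₁ + 2 * B₂ p * e₂
  · linear_combination d₂ (1, 0) (I, 0) - d₁ (0, 1) (0, I) - cU + 2 * B₂ p * e₁ - 2 * B₁ p * e₂

namespace Bicomplex

@[simp] theorem sub_z1 (w v : Bicomplex) : (w - v).z1 = w.z1 - v.z1 := by
  rw [sub_eq_add_neg, add_z1, neg_z1, ← sub_eq_add_neg]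

@[simp] theorem sub_z2 (w v : Bicomplex) : (w - v).z2 = w.z2 - v.z2 := by
  rw [sub_eq_add_neg, add_z2, neg_z2, ← sub_eq_add_neg]

theorem ofComplex_sub (c d : ℂ) : ofComplex (c - d) = ofComplex c - ofComplex d := by
  ext <;> simp [ofComplex]

theorem ofComplex_eq_zero {c : ℂ} : ofComplex c = 0 ↔ c = 0 :=
  ⟨congrArg z1, fun h => by rw [h]; rfl⟩

def onProd (g : Bicomplex → ℂ) : ℂ × ℂ → ℂ := fun q => g (ofProd q)

@[simp] theorem toProd_ofProd (q : ℂ × ℂ) : toProd (ofProd q) = q := rfl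

@[simp] theorem onProd_toProd (g : Bicomplex → ℂ) (w : Bicomplex) : onProd g (toProd w) = g w :=
  rfl

@[simp] theorem s1_apply (f : Bicomplex → Bicomplex) (w : Bicomplex) : s1 f w = (f w).z1 := rfl

@[simp] theorem s2_apply (f : Bicomplex → Bicomplex) (w : Bicomplex) : s2 f w = (f w).z2 := rfl

theorem continuous_ofProd : Continuous ofProd :=
  continuous_induced_rng.mpr (continuous_id (X := ℂ × ℂ))

theorem isOpen_image_toProd {U : Set Bicomplex} (hU : IsOpen U) : IsOpen (toProd '' U) := by
  have himage : toProd '' U = ofProd ⁻¹' U :=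
    Set.ext fun q => ⟨by rintro ⟨x, hx, rfl⟩; exact hx, fun hq => ⟨ofProd q, hq, rfl⟩⟩
  rw [himage]
  exact hU.preimage continuous_ofProd

theorem TContDiffOn.contDiffAt_onProd_s1 {n : ℕ∞} {f : Bicomplex → Bicomplex}
    {U : Set Bicomplex} (hf : TContDiffOn n f U) (hU : IsOpen U) {w : Bicomplex} (hw : w ∈ U) :
    ContDiffAt ℝ n (onProd (s1 f)) (toProd w) :=
  (contDiff_fst.comp_contDiffOn hf).contDiffAt ((isOpen_image_toProd hU).mem_nhds ⟨w, hw, rfl⟩)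

theorem TContDiffOn.contDiffAt_onProd_s2 {n : ℕ∞} {f : Bicomplex → Bicomplex}
    {U : Set Bicomplex} (hf : TContDiffOn n f U) (hU : IsOpen U) {w : Bicomplex} (hw : w ∈ U) :
    ContDiffAt ℝ n (onProd (s2 f)) (toProd w) :=
  (contDiff_snd.comp_contDiffOn hf).contDiffAt ((isOpen_image_toProd hU).mem_nhds ⟨w, hw, rfl⟩)

theorem toProd_add_ofReal_mul (w e : Bicomplex) (t : ℝ) :
    toProd (w + ofReal t * e) = toProd w + t • toProd e := by
  ext <;> simp [toProd, ofReal, Complex.real_smul]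

theorem pd_eq_fderiv {g : Bicomplex → ℂ} {G : ℂ × ℂ → ℂ} {w : Bicomplex} (e : Bicomplex)
    (hG : DifferentiableAt ℝ G (toProd w)) (hg : onProd g =ᶠ[𝓝 (toProd w)] G) :
    pd e g w = fderiv ℝ G (toProd w) (toProd e) := by
  have hline : HasDerivAt (fun t : ℝ => toProd w + t • toProd e) (toProd e) 0 := by
    simpa using ((hasDerivAt_id (0 : ℝ)).smul_const (toProd e)).const_add (toProd w)
  have hclose : Tendsto (fun t : ℝ => toProd w + t • toProd e) (𝓝 0) (𝓝 (toProd w)) := by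
    simpa using hline.continuousAt.tendsto
  have hrestrict : (fun t : ℝ => g (w + ofReal t * e)) =ᶠ[𝓝 0]
      fun t => G (toProd w + t • toProd e) := by
    filter_upwards [hclose.eventually hg] with t ht
    rw [← toProd_add_ofReal_mul] at ht ⊢
    exact ht
  rw [pd, hrestrict.deriv_eq]
  exact (hG.hasFDerivAt.comp_hasDerivAt_of_eq 0 hline (by simp)).deriv

section

variable {g : Bicomplex → ℂ} {G : ℂ × ℂ → ℂ} {w : Bicomplex}

theorem dz1_eq_wirtinger (hG : DifferentiableAt ℝ G (toProd w))
    (hg : onProd g =ᶠ[𝓝 (toProd w)] G) : dz1 g w = ∂₁ G (toProd w) := by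
  rw [dz1, pd_eq_fderiv 1 hG hg, pd_eq_fderiv i1 hG hg]
  rfl

theorem dz2_eq_wirtinger (hG : DifferentiableAt ℝ G (toProd w))
    (hg : onProd g =ᶠ[𝓝 (toProd w)] G) : dz2 g w = ∂₂ G (toProd w) := by
  rw [dz2, pd_eq_fderiv i2 hG hg, pd_eq_fderiv jj hG hg]
  rfl

end

theorem dz1_const (c : ℂ) (w : Bicomplex) : dz1 (fun _ => c) w = 0 := by
  simp [dz1, pd]

theorem dz2_const (c : ℂ) (w : Bicomplex) : dz2 (fun _ => c) w = 0 := by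
  simp [dz2, pd]

theorem dOm_eq (f : Bicomplex → Bicomplex) (w : Bicomplex) :
    dOm f w = ⟨(dz1 (s1 f) w + dz2 (s2 f) w) / 2, (dz1 (s2 f) w - dz2 (s1 f) w) / 2⟩ := by
  ext <;> simp only [dOm, dZ1, dZ2, i2, ofComplex, mul_z1, mul_z2, sub_z1, sub_z2] <;> ring

theorem dOmBar_eq (f : Bicomplex → Bicomplex) (w : Bicomplex) :
    dOmBar f w = ⟨(dz1 (s1 f) w - dz2 (s2 f) w) / 2, (dz1 (s2 f) w + dz2 (s1 f) w) / 2⟩ := by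
  ext <;> simp only [dOmBar, dZ1, dZ2, i2, ofComplex, mul_z1, mul_z2, add_z1, add_z2] <;> ring


theorem dOmBar_dOm_ofComplex {u : Bicomplex → ℂ} {w : Bicomplex}
    (hu : ContDiffAt ℝ 2 (onProd u) (toProd w)) :
    dOmBar (fun v => dOm (fun x => ofComplex (u x)) v) w =
      ofComplex ((∂₁ (∂₁ (onProd u)) (toProd w) + ∂₂ (∂₂ (onProd u)) (toProd w)) / 4) := by
  have hnear : ∀ᶠ q in 𝓝 (toProd w), DifferentiableAt ℝ (onProd u) q :=
    (hu.eventually (by simp)).mono fun q hq => hq.differentiableAt (by norm_num)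
  have h₁ : onProd (s1 fun v => dOm (fun x => ofComplex (u x)) v) =ᶠ[𝓝 (toProd w)]
      fun q => 2⁻¹ * ∂₁ (onProd u) q := by
    filter_upwards [hnear] with q hq
    change (dOm (fun x => ofComplex (u x)) (ofProd q)).z1 = _
    rw [dOm_eq]
    change (dz1 u (ofProd q) + dz2 (fun _ => 0) (ofProd q)) / 2 = _
    rw [dz1_eq_wirtinger (g := u) (w := ofProd q) hq .rfl, dz2_const, toProd_ofProd]
    ring
  have h₂ : onProd (s2 fun v => dOm (fun x => ofComplex (u x)) v) =ᶠ[𝓝 (toProd w)]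
      fun q => -2⁻¹ * ∂₂ (onProd u) q := by
    filter_upwards [hnear] with q hq
    change (dOm (fun x => ofComplex (u x)) (ofProd q)).z2 = _
    rw [dOm_eq]
    change (dz1 (fun _ => 0) (ofProd q) - dz2 u (ofProd q)) / 2 = _
    rw [dz2_eq_wirtinger (g := u) (w := ofProd q) hq .rfl, dz1_const, toProd_ofProd]
    ring
  have hd₁ := differentiableAt_wirtinger ((1 : ℂ), (0 : ℂ)) (I, 0) hu
  have hd₂ := differentiableAt_wirtinger ((0 : ℂ), (1 : ℂ)) (0, I) hu
  rw [dOmBar_eq, dz1_eq_wirtinger (hd₁.const_mul _) h₁, dz2_eq_wirtinger (hd₂.const_mul _) h₂,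
    dz1_eq_wirtinger (hd₂.const_mul _) h₂, dz2_eq_wirtinger (hd₁.const_mul _) h₁,
    wirtinger_const_mul _ _ hd₁, wirtinger_const_mul _ _ hd₁, wirtinger_const_mul _ _ hd₂,
    wirtinger_const_mul _ _ hd₂]
  ext
  · simp only [ofComplex]
    ring
  · simp only [ofComplex]
    linear_combination (-1 / 4 : ℂ) * wirtinger_comm ((1 : ℂ), (0 : ℂ)) (I, 0) hu (0, 1) (0, I)


theorem wirtinger_system_of_dOmBar_eq_mul_dag2 {b W : Bicomplex → Bicomplex} {w : Bicomplex}
    (hU : DifferentiableAt ℝ (onProd (s1 W)) (toProd w))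
    (hV : DifferentiableAt ℝ (onProd (s2 W)) (toProd w))
    (h : dOmBar W w = b w * dag2 (W w)) :
    ∂₁ (onProd (s1 W)) (toProd w) - ∂₂ (onProd (s2 W)) (toProd w) =
        2 * ((b w).z1 * (W w).z1 + (b w).z2 * (W w).z2) ∧
      ∂₁ (onProd (s2 W)) (toProd w) + ∂₂ (onProd (s1 W)) (toProd w) =
        2 * ((b w).z2 * (W w).z1 - (b w).z1 * (W w).z2) := by
  rw [dOmBar_eq, dz1_eq_wirtinger hU .rfl, dz2_eq_wirtinger hV .rfl, dz1_eq_wirtinger hV .rfl,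
    dz2_eq_wirtinger hU .rfl] at h
  have h₁ := congrArg z1 h
  have h₂ := congrArg z2 h
  simp only [mul_z1, mul_z2, dag2] at h₁ h₂
  exact ⟨by linear_combination 2 * h₁, by linear_combination 2 * h₂⟩

theorem schrodinger_of_dOmBar_eq_mul_dag2 {b W : Bicomplex → Bicomplex} {w : Bicomplex}
    (hU : ContDiffAt ℝ 2 (onProd (s1 W)) (toProd w))
    (hV : ContDiffAt ℝ 2 (onProd (s2 W)) (toProd w))
    (hB₁ : DifferentiableAt ℝ (onProd (s1 b)) (toProd w))
    (hB₂ : DifferentiableAt ℝ (onProd (s2 b)) (toProd w))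
    (heq : ∀ᶠ x in 𝓝 w, dOmBar W x = b x * dag2 (W x)) (hbC : (dOm b w).z2 = 0) :
    dOmBar (fun v => dOm (fun u => ofComplex ((W u).z1)) v) w -
        ofComplex (((b w * dag2 (b w)).z1 + (dOm b w).z1) * (W w).z1) = 0 ∧
      dOmBar (fun v => dOm (fun u => ofComplex ((W u).z2)) v) w -
        ofComplex (((b w * dag2 (b w)).z1 - (dOm b w).z1) * (W w).z2) = 0 := by
  have hnear : ∀ᶠ q in 𝓝 (toProd w), ContDiffAt ℝ 2 (onProd (s1 W)) q ∧
      ContDiffAt ℝ 2 (onProd (s2 W)) q ∧ dOmBar W (ofProd q) = b (ofProd q) * dag2 (W (ofProd q)) :=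
    (hU.eventually (by simp)).and <| (hV.eventually (by simp)).and <|
      (continuous_ofProd.tendsto (toProd w)).eventually heq
  have hsys := hnear.mono fun q ⟨hUq, hVq, hq⟩ =>
    wirtinger_system_of_dOmBar_eq_mul_dag2 (w := ofProd q) (hUq.differentiableAt two_ne_zero)
      (hVq.differentiableAt two_ne_zero) hq
  obtain ⟨hu, hv⟩ := wirtinger_laplacian_of_system hU hV hB₁ hB₂ (hsys.mono fun _ h => h.1)
    (hsys.mono fun _ h => h.2)
  have hbω : dOm b w = ⟨(∂₁ (onProd (s1 b)) (toProd w) + ∂₂ (onProd (s2 b)) (toProd w)) / 2,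
      (∂₁ (onProd (s2 b)) (toProd w) - ∂₂ (onProd (s1 b)) (toProd w)) / 2⟩ := by
    rw [dOm_eq, dz1_eq_wirtinger hB₁ .rfl, dz2_eq_wirtinger hB₂ .rfl, dz1_eq_wirtinger hB₂ .rfl,
      dz2_eq_wirtinger hB₁ .rfl]
  have hΔu : dOmBar (fun v => dOm (fun u => ofComplex ((W u).z1)) v) w = ofComplex
      ((∂₁ (∂₁ (onProd (s1 W))) (toProd w) + ∂₂ (∂₂ (onProd (s1 W))) (toProd w)) / 4) :=
    dOmBar_dOm_ofComplex hU
  have hΔv : dOmBar (fun v => dOm (fun u => ofComplex ((W u).z2)) v) w = ofComplex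
      ((∂₁ (∂₁ (onProd (s2 W))) (toProd w) + ∂₂ (∂₂ (onProd (s2 W))) (toProd w)) / 4) :=
    dOmBar_dOm_ofComplex hV
  simp only [onProd_toProd, s1_apply, s2_apply] at hu hv
  rw [hbω] at hbC ⊢
  rw [hΔu, hΔv, ← ofComplex_sub, ← ofComplex_sub, ofComplex_eq_zero, ofComplex_eq_zero]
  simp only [mul_z1, dag2] at hbC ⊢
  constructor
  · linear_combination hu / 4 + (W w).z2 * hbC
  · linear_combination hv / 4 + (W w).z1 * hbC

end Bicomplex

/-- If `b : Ω → 𝕋` has `ℂ(i₁)`-valued `b_ω` and `W = u + i₂v` solves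
`W_{ω†₂} = bW†₂` on `Ω`, then `u` solves `∂_{ω†₂}∂_ω u - (|b|²_{i₁} + b_ω)u = 0` and `v`
solves `∂_{ω†₂}∂_ω v - (|b|²_{i₁} - b_ω)v = 0` on `Ω`. -/
theorem scalar_vector_parts_solve_schrodinger (Ω : Set Bicomplex) (hΩ : IsOpen Ω)
    (b W : Bicomplex → Bicomplex)
    (hb : TContDiffOn 2 b Ω) (hW : TContDiffOn 2 W Ω)
    (hbC : ∀ w ∈ Ω, (dOm b w).z2 = 0)
    (heq : ∀ w ∈ Ω, dOmBar W w = b w * dag2 (W w)) :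
    (∀ w ∈ Ω,
      dOmBar (fun v => dOm (fun u => ofComplex ((W u).z1)) v) w -
        ofComplex (((b w * dag2 (b w)).z1 + (dOm b w).z1) * (W w).z1) = 0) ∧
    (∀ w ∈ Ω,
      dOmBar (fun v => dOm (fun u => ofComplex ((W u).z2)) v) w -
        ofComplex (((b w * dag2 (b w)).z1 - (dOm b w).z1) * (W w).z2) = 0) :=
  forall₂_and.mp fun w hw =>
    schrodinger_of_dOmBar_eq_mul_dag2 (hW.contDiffAt_onProd_s1 hΩ hw)
      (hW.contDiffAt_onProd_s2 hΩ hw)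
      ((hb.contDiffAt_onProd_s1 hΩ hw).differentiableAt two_ne_zero)
      ((hb.contDiffAt_onProd_s2 hΩ hw).differentiableAt two_ne_zero)
      (eventually_of_mem (hΩ.mem_nhds hw) heq) (hbC w hw)
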